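/- Let X₁ and X₂ be Veblen multi-hypergraphs of rank k with disjoint vertex sets and disjoint edge sets, and let X = X₁ ⊔ X₂ be their disjoint union. Then for every integer n ≥ 0, Δ(n, X) = Δ(n, X₁) · Δ(n, X₂). -/

import Mathlib

/-! Multi-hypergraphs of rank `k` are presented by an edge-endpoint map
`φ : E → Finset V` (with `(φ e).card = k`); edges `e, f` are *parallel* when
`φ e = φ f`.  A sub-multi-hypergraph is given by a set `A : Set E` of edges, its
vertex set being the support `hSupp φ A`. -/

/-- The vertex support of a set of edges. -/
def hSupp {V E : Type} (φ : E → Finset V) (A : Set E) : Set V :=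
  {v | ∃ e ∈ A, v ∈ φ e}

/-- The degree of a vertex in a set of edges. -/
noncomputable def hDeg {V E : Type} (φ : E → Finset V) (A : Set E) (v : V) : ℕ :=
  Nat.card {e : E // e ∈ A ∧ v ∈ φ e}

/-- A set of edges is Veblen when every vertex degree is divisible by `k`. -/
def hVeblen {V E : Type} (φ : E → Finset V) (k : ℕ) (A : Set E) : Prop :=
  ∀ v : V, k ∣ hDeg φ A v

/-- A nonempty set of edges is connected when any two of its edges are joined by a
chain of edges in it, consecutive ones sharing a vertex. -/
def hConnected {V E : Type} [DecidableEq V] (φ : E → Finset V) (A : Set E) : Prop :=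
  A.Nonempty ∧ ∀ e ∈ A, ∀ f ∈ A,
    Relation.ReflTransGen (fun a b => a ∈ A ∧ b ∈ A ∧ ((φ a) ∩ (φ b)).Nonempty) e f

/-- `DWalkFrom ψ u v l` : the list of arcs `l` is a directed walk from `u` to `v`. -/
def DWalkFrom {V A : Type} (ψ : A → V × V) : V → V → List A → Prop
  | u, v, [] => u = v
  | u, v, a :: l => (ψ a).1 = u ∧ DWalkFrom ψ (ψ a).2 v l

/-- One-step cyclic rotation of a based closed walk. -/
def drot {V A : Type} (ψ : A → V × V) : V × List A → V × List A
  | (u, []) => (u, [])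
  | (_, a :: l) => ((ψ a).2, l ++ [a])

/-- The number of Eulerian circuits of a multi-digraph: Eulerian trails (closed trails
using every arc) up to cyclic rotation of the arcs. -/
noncomputable def circCount {V A : Type} (ψ : A → V × V) : ℕ :=
  Nat.card (Quot (fun a b :
      {q : V × List A // DWalkFrom ψ q.1 q.1 q.2 ∧ q.2.Nodup ∧ ∀ x : A, x ∈ q.2} =>
    drot ψ a.1 = b.1))

/-- In-degree of a vertex in a multi-digraph. -/
noncomputable def dInDeg {V A : Type} (ψ : A → V × V) (v : V) : ℕ :=
  Nat.card {a : A // (ψ a).2 = v}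

/-- Out-degree of a vertex in a multi-digraph. -/
noncomputable def dOutDeg {V A : Type} (ψ : A → V × V) (v : V) : ℕ :=
  Nat.card {a : A // (ψ a).1 = v}

/-- A multi-digraph is connected (on the vertices it touches). -/
def DigConn {V A : Type} (ψ : A → V × V) : Prop :=
  ∀ u v : V, (∃ a : A, (ψ a).1 = u ∨ (ψ a).2 = u) →
    (∃ a : A, (ψ a).1 = v ∨ (ψ a).2 = v) →
    Relation.ReflTransGen (fun x y => ∃ a : A, ψ a = (x, y) ∨ ψ a = (y, x)) u v

/-- A multi-digraph is Eulerian: connected with in-degree equal to out-degree at every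
vertex. -/
def DigEulerian {V A : Type} (ψ : A → V × V) : Prop :=
  DigConn ψ ∧ ∀ v : V, dInDeg ψ v = dOutDeg ψ v

/-- A rooting of the sub-multi-hypergraph `A`: a tuple of rooted stars
`(S_{v₁}(e₁), …, S_{v_d}(e_d))`, i.e. a list of (root, edge) pairs whose roots are
nondecreasing, whose edges enumerate `A` without repetition, with each root a vertex of
its edge, and in which every vertex occurs as some root. -/
def IsRooting {V E : Type} [LinearOrder V] (φ : E → Finset V) (A : Set E)
    (l : List (V × E)) : Prop :=
  List.Pairwise (· ≤ ·) (l.map Prod.fst) ∧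
  (l.map Prod.snd).Nodup ∧
  (∀ e : E, e ∈ l.map Prod.snd ↔ e ∈ A) ∧
  (∀ p ∈ l, p.1 ∈ φ p.2) ∧
  ∀ v ∈ hSupp φ A, v ∈ l.map Prod.fst

/-- The arcs of the multi-digraph `D_R` of a rooting `R = l`: for the `j`-th star
`S_{v_j}(e_j)` and each `w ∈ e_j \ {v_j}`, an arc `(v_j, w)`. -/
def RArc {V E : Type} (φ : E → Finset V) (l : List (V × E)) : Type :=
  {x : Fin l.length × V // x.2 ∈ φ (l.get x.1).2 ∧ x.2 ≠ (l.get x.1).1}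

/-- The endpoint map of the multi-digraph `D_R` of a rooting. -/
def rψ {V E : Type} (φ : E → Finset V) (l : List (V × E)) : RArc φ l → V × V :=
  fun a => ((l.get a.1.1).1, a.1.2)

/-- The associated coefficient `C_Y` of a (connected Veblen) sub-multi-hypergraph `A`:
`C_A = ∑_{R Eulerian rooting} |𝔠(D_R)| / ∏_v (deg⁻_{D_R}(v))!`. -/
noncomputable def assocC {V E : Type} [Fintype V] [LinearOrder V]
    (φ : E → Finset V) (A : Set E) : ℚ :=
  ∑ᶠ R : {l : List (V × E) // IsRooting φ A l ∧ DigEulerian (rψ φ l)},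
    (circCount (rψ φ R.1) : ℚ) /
      ∏ v : V, (Nat.factorial (dInDeg (rψ φ R.1) v) : ℚ)

/-- A partition of the edge set `B` into nonempty connected Veblen parts. -/
def hAdmissible {V E : Type} [DecidableEq V] (φ : E → Finset V) (k : ℕ) (B : Set E)
    (S : Set (Set E)) : Prop :=
  (∀ A ∈ S, A.Nonempty ∧ A ⊆ B ∧ hConnected φ A ∧ hVeblen φ k A) ∧
  (∀ A ∈ S, ∀ A' ∈ S, A ≠ A' → A ∩ A' = ∅) ∧
  (∀ e ∈ B, ∃ A ∈ S, e ∈ A)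

/-- A permutation in `Sym_∼(B)`: it maps each edge to a parallel edge and fixes edges
outside `B`. -/
def ParPerm {V E : Type} (φ : E → Finset V) (B : Set E) (σ : Equiv.Perm E) : Prop :=
  (∀ e, φ (σ e) = φ e) ∧ ∀ e ∉ B, σ e = e

/-- Two parts are equivalent when some permutation in `Sym_∼(B)` maps one onto the
other. -/
def PartEquiv {V E : Type} (φ : E → Finset V) (B : Set E) (A A' : Set E) : Prop :=
  ∃ σ : Equiv.Perm E, ParPerm φ B σ ∧ σ '' A = A'

/-- Two partitions are in the same orbit of `Sym_∼(B)`. -/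
def OrbEquiv {V E : Type} (φ : E → Finset V) (B : Set E) (S S' : Set (Set E)) : Prop :=
  ∃ σ : Equiv.Perm E, ParPerm φ B σ ∧ (fun A : Set E => σ '' A) '' S = S'

/-- `α_S` : the product, over the equivalence classes of the parts of `S` under
`PartEquiv`, of the class sizes. -/
noncomputable def alphaS {V E : Type} (φ : E → Finset V) (B : Set E)
    (S : Set (Set E)) : ℚ :=
  ∏ᶠ q : Quot (fun A A' : S => PartEquiv φ B A.1 A'.1),
    (Nat.card {A : S // Quot.mk _ A = q} : ℚ)

/-- The summand of `Δ(n, X)` attached to a partition `S` of the edge set `B`: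
`(-(k-1)ⁿ)^{c(S)} · C_S / α_S` where `c(S)` is the number of parts and
`C_S = ∏_{A ∈ S} C_A`. -/
noncomputable def deltaTerm {V E : Type} [Fintype V] [LinearOrder V]
    (φ : E → Finset V) (k n : ℕ) (B : Set E) (S : Set (Set E)) : ℚ :=
  (-(((k : ℚ) - 1) ^ n)) ^ Nat.card S * (∏ᶠ A ∈ S, assocC φ A) / alphaS φ B S

/-- `T` is a set of representatives for the orbits, under `Sym_∼(B)`, of the partitions
of `B` into nonempty connected Veblen parts. -/
def IsOrbitReps {V E : Type} [DecidableEq V] (φ : E → Finset V) (k : ℕ) (B : Set E)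
    (T : Set (Set (Set E))) : Prop :=
  (∀ S ∈ T, hAdmissible φ k B S) ∧
  ∀ S : Set (Set E), hAdmissible φ k B S → ∃! S', S' ∈ T ∧ OrbEquiv φ B S S'

/-! Every part of an admissible partition is connected, so when `X₁` and `X₂` share no vertex
it lies in `X₁` or in `X₂`: partitions of `X` are exactly the unions `S₁ ∪ S₂` of partitions
of `X₁` and of `X₂`. If no edge is empty, the edges of `X₁` form a union of parallel classes,
so every permutation of parallel edges splits into one of `X₁` and one of `X₂`. Hence the orbit
of `S₁ ∪ S₂` determines the orbits of `S₁` and `S₂`, and `c`, `C` and `α` are multiplicative: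
`(-(k-1)ⁿ)^{c(S₁ ∪ S₂)} C_{S₁ ∪ S₂} / α_{S₁ ∪ S₂}` is the product of the two summands, and the
double sum factors. An empty edge has no rooting, so its coefficient `C` is `0` and both sides
vanish. -/

section ArcRelabel

variable {V A A' : Type} (ψ : A → V × V) (ε : A' ≃ A)

theorem dWalkFrom_map (l : List A') (u v : V) :
    DWalkFrom ψ u v (l.map ε) ↔ DWalkFrom (ψ ∘ ε) u v l := by
  induction l generalizing u with
  | nil => rfl
  | cons a l ih => simp [DWalkFrom, ih]

theorem drot_map (q : V × List A') :
    drot ψ (q.1, q.2.map ε) = ((drot (ψ ∘ ε) q).1, (drot (ψ ∘ ε) q).2.map ε) := by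
  obtain ⟨u, _ | ⟨a, l⟩⟩ := q
  · rfl
  · simp [drot]

theorem circCount_comp_equiv : circCount (ψ ∘ ε) = circCount ψ := by
  let F : V × List A' ≃ V × List A := (Equiv.refl V).prodCongr (Equiv.listEquivOfEquiv ε)
  have hF : ∀ q : V × List A', (DWalkFrom (ψ ∘ ε) q.1 q.1 q.2 ∧ q.2.Nodup ∧ ∀ x, x ∈ q.2) ↔
      (DWalkFrom ψ (F q).1 (F q).1 (F q).2 ∧ (F q).2.Nodup ∧ ∀ x, x ∈ (F q).2) := by
    rintro ⟨u, l⟩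
    simp [F, Equiv.listEquivOfEquiv, dWalkFrom_map, List.nodup_map_iff ε.injective,
      ← ε.forall_congr_right]
  refine Nat.card_congr (Quot.congr (Equiv.subtypeEquiv F hF) ?_)
  rintro ⟨⟨u, l⟩, -⟩ ⟨⟨u', l'⟩, -⟩
  show drot (ψ ∘ ε) (u, l) = (u', l') ↔ drot ψ (u, l.map ε) = (u', l'.map ε)
  rw [drot_map ψ ε (u, l)]
  simp [Prod.ext_iff, (List.map_injective_iff.2 ε.injective).eq_iff]

theorem dInDeg_comp_equiv (v : V) : dInDeg (ψ ∘ ε) v = dInDeg ψ v :=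
  Nat.card_congr (ε.subtypeEquiv fun _ => Iff.rfl)

theorem dOutDeg_comp_equiv (v : V) : dOutDeg (ψ ∘ ε) v = dOutDeg ψ v :=
  Nat.card_congr (ε.subtypeEquiv fun _ => Iff.rfl)

theorem digEulerian_comp_equiv : DigEulerian (ψ ∘ ε) ↔ DigEulerian ψ := by
  have hends : ∀ u, (∃ a, ((ψ ∘ ε) a).1 = u ∨ ((ψ ∘ ε) a).2 = u) ↔
      ∃ a, (ψ a).1 = u ∨ (ψ a).2 = u :=
    fun u => ε.exists_congr_right (q := fun a => (ψ a).1 = u ∨ (ψ a).2 = u)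
  have hrel : (fun x y => ∃ a, (ψ ∘ ε) a = (x, y) ∨ (ψ ∘ ε) a = (y, x)) =
      fun x y => ∃ a, ψ a = (x, y) ∨ ψ a = (y, x) :=
    funext₂ fun x y => propext (ε.exists_congr_right (q := fun a => ψ a = (x, y) ∨ ψ a = (y, x)))
  unfold DigEulerian DigConn
  simp only [dInDeg_comp_equiv, dOutDeg_comp_equiv, hends, hrel]

end ArcRelabel

section EdgeRelabel

variable {V E : Type} (φ : E → Finset V) {σ : Equiv.Perm E}

def rarcEquiv (hσ : ∀ e, φ (σ e) = φ e) (l : List (V × E)) :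
    RArc φ l ≃ RArc φ (l.map (Prod.map id σ)) :=
  Equiv.subtypeEquiv ((finCongr (l.length_map _).symm).prodCongr (Equiv.refl V)) fun x => by
    simp [hσ]

theorem rψ_comp_rarcEquiv (hσ : ∀ e, φ (σ e) = φ e) (l : List (V × E)) :
    rψ φ (l.map (Prod.map id σ)) ∘ rarcEquiv φ hσ l = rψ φ l := by
  funext x
  have hx : (rarcEquiv φ hσ l x).1 = (Fin.cast (l.length_map _).symm x.1.1, x.1.2) := rfl
  simp [rψ, hx]

theorem hSupp_image (hσ : ∀ e, φ (σ e) = φ e) (A : Set E) : hSupp φ (σ '' A) = hSupp φ A := by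
  ext v
  constructor
  · rintro ⟨_, ⟨e, he, rfl⟩, hv⟩
    exact ⟨e, he, hσ e ▸ hv⟩
  · rintro ⟨e, he, hv⟩
    exact ⟨σ e, ⟨e, he, rfl⟩, (hσ e).symm ▸ hv⟩

theorem IsRooting.map [LinearOrder V] (hσ : ∀ e, φ (σ e) = φ e) {A : Set E} {l : List (V × E)}
    (h : IsRooting φ A l) :
    IsRooting φ (σ '' A) (l.map (Prod.map id σ)) := by
  obtain ⟨hsorted, hnodup, hedges, hroots, hcover⟩ := h
  have hfst : (l.map (Prod.map id σ)).map Prod.fst = l.map Prod.fst := by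
    simp [Function.comp_def]
  have hsnd : (l.map (Prod.map id σ)).map Prod.snd = (l.map Prod.snd).map σ := by
    simp [Function.comp_def]
  refine ⟨hfst ▸ hsorted, hsnd ▸ hnodup.map σ.injective, fun e => ?_, ?_, ?_⟩
  · simp only [hsnd, List.mem_map, Set.mem_image, ← hedges]
  · rintro _ hp
    obtain ⟨q, hq, rfl⟩ := List.mem_map.1 hp
    simpa [hσ] using hroots q hq
  · intro v hv
    exact hfst ▸ hcover v (hSupp_image φ hσ A ▸ hv)

theorem isRooting_map_iff [LinearOrder V] (hσ : ∀ e, φ (σ e) = φ e) {A : Set E} {l : List (V × E)} :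
    IsRooting φ (σ '' A) (l.map (Prod.map id σ)) ↔ IsRooting φ A l := by
  refine ⟨fun h => ?_, IsRooting.map φ hσ⟩
  have hσ' : ∀ e, φ (σ⁻¹ e) = φ e := fun e => by simpa using (hσ (σ⁻¹ e)).symm
  simpa [Set.image_image, Function.comp_def, Prod.map] using h.map φ hσ'

def rootingEquiv [LinearOrder V] (hσ : ∀ e, φ (σ e) = φ e) (A : Set E) :
    {l : List (V × E) // IsRooting φ A l ∧ DigEulerian (rψ φ l)} ≃
      {l : List (V × E) // IsRooting φ (σ '' A) l ∧ DigEulerian (rψ φ l)} :=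
  (Equiv.listEquivOfEquiv ((Equiv.refl V).prodCongr σ)).subtypeEquiv fun l => by
    show _ ↔ IsRooting φ (σ '' A) (l.map (Prod.map id σ)) ∧
      DigEulerian (rψ φ (l.map (Prod.map id σ)))
    rw [isRooting_map_iff φ hσ, ← digEulerian_comp_equiv _ (rarcEquiv φ hσ l),
      rψ_comp_rarcEquiv]

theorem assocC_image [Fintype V] [LinearOrder V] (hσ : ∀ e, φ (σ e) = φ e) (A : Set E) :
    assocC φ (σ '' A) = assocC φ A := by
  unfold assocC
  rw [← finsum_comp_equiv (rootingEquiv φ hσ A)]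
  refine finsum_congr fun R => ?_
  show (circCount (rψ φ (R.1.map (Prod.map id σ))) : ℚ) /
      ∏ v, ((dInDeg (rψ φ (R.1.map (Prod.map id σ))) v).factorial : ℚ) = _
  rw [← rψ_comp_rarcEquiv φ hσ R.1, circCount_comp_equiv]
  simp only [dInDeg_comp_equiv]

end EdgeRelabel

section ParPerm

variable {V E : Type} {φ : E → Finset V} {B : Set E} {σ τ : Equiv.Perm E}

theorem ParPerm.one : ParPerm φ B 1 :=
  ⟨fun _ => rfl, fun _ _ => rfl⟩

theorem ParPerm.inv (h : ParPerm φ B σ) : ParPerm φ B σ⁻¹ := by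
  refine ⟨fun e => ?_, fun e he => ?_⟩
  · simpa using (h.1 (σ⁻¹ e)).symm
  · rw [Equiv.Perm.inv_eq_iff_eq, h.2 e he]

theorem ParPerm.mul (hσ : ParPerm φ B σ) (hτ : ParPerm φ B τ) : ParPerm φ B (σ * τ) :=
  ⟨fun e => (hσ.1 (τ e)).trans (hτ.1 e), fun e he => by simp [hτ.2 e he, hσ.2 e he]⟩

theorem ParPerm.mem (h : ParPerm φ B σ) {e : E} (he : e ∈ B) : σ e ∈ B := by
  by_contra hσe
  have hfix : σ e = e := σ.injective (h.2 _ hσe)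
  exact hσe (by rwa [hfix])

theorem orbEquiv_equivalence : Equivalence (OrbEquiv φ B) where
  refl S := ⟨1, ParPerm.one, by simp⟩
  symm := by
    rintro S _ ⟨σ, hσ, rfl⟩
    exact ⟨σ⁻¹, hσ.inv, by simp [Set.image_image]⟩
  trans := by
    rintro S _ _ ⟨σ, hσ, rfl⟩ ⟨τ, hτ, rfl⟩
    exact ⟨τ * σ, hτ.mul hσ, by simp [Set.image_image, Set.image_comp]⟩

theorem PartEquiv.symm {A A' : Set E} (h : PartEquiv φ B A A') : PartEquiv φ B A' A := by
  obtain ⟨σ, hσ, rfl⟩ := h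
  exact ⟨σ⁻¹, hσ.inv, by simp [Set.image_image]⟩

theorem partEquiv_image_iff (hσ : ParPerm φ B σ) {A A' : Set E} :
    PartEquiv φ B (σ '' A) (σ '' A') ↔ PartEquiv φ B A A' := by
  constructor
  · rintro ⟨τ, hτ, h⟩
    refine ⟨σ⁻¹ * τ * σ, (hσ.inv.mul hτ).mul hσ, ?_⟩
    calc ⇑(σ⁻¹ * τ * σ) '' A = ⇑σ⁻¹ '' (τ '' (σ '' A)) := by simp [Set.image_image]
      _ = A' := by rw [h]; simp [Set.image_image]
  · rintro ⟨τ, hτ, rfl⟩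
    refine ⟨σ * τ * σ⁻¹, (hσ.mul hτ).mul hσ.inv, ?_⟩
    simp [Set.image_image]

end ParPerm

section ParallelClosed

variable {V E : Type} {φ : E → Finset V} {B : Set E} {σ : Equiv.Perm E}

def ParallelClosed (φ : E → Finset V) (B : Set E) : Prop :=
  ∀ ⦃e f : E⦄, φ e = φ f → e ∈ B → f ∈ B

theorem ParallelClosed.compl (hB : ParallelClosed φ B) : ParallelClosed φ Bᶜ :=
  fun _ _ hef he hf => he (hB hef.symm hf)

theorem ParallelClosed.perm_mem_iff (hB : ParallelClosed φ B) (hσ : ∀ e, φ (σ e) = φ e)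
    (e : E) : σ e ∈ B ↔ e ∈ B :=
  ⟨hB (hσ e), hB (hσ e).symm⟩

theorem ParallelClosed.exists_parPerm_eqOn (hB : ParallelClosed φ B)
    (hσ : ∀ e, φ (σ e) = φ e) : ∃ τ, ParPerm φ B τ ∧ Set.EqOn τ σ B := by
  classical
  refine ⟨Equiv.Perm.ofSubtype (σ.subtypePerm (hB.perm_mem_iff hσ)),
    ⟨fun e => ?_, fun e he => Equiv.Perm.ofSubtype_apply_of_not_mem _ he⟩,
    fun e he => by simp [Equiv.Perm.ofSubtype_apply_of_mem _ he]⟩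
  by_cases he : e ∈ B
  · simp [Equiv.Perm.ofSubtype_apply_of_mem _ he, hσ]
  · rw [Equiv.Perm.ofSubtype_apply_of_not_mem _ he]

theorem ParallelClosed.orbEquiv_image (hB : ParallelClosed φ B) (hσ : ∀ e, φ (σ e) = φ e)
    {S : Set (Set E)} (hS : ∀ A ∈ S, A ⊆ B) : OrbEquiv φ B S ((σ '' ·) '' S) := by
  obtain ⟨τ, hτ, heq⟩ := hB.exists_parPerm_eqOn hσ
  exact ⟨τ, hτ, Set.image_congr fun A hA => (heq.mono (hS A hA)).image_eq⟩

theorem ParallelClosed.partEquiv_univ_iff (hB : ParallelClosed φ B) {A A' : Set E}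
    (hA : A ⊆ B) : PartEquiv φ Set.univ A A' ↔ PartEquiv φ B A A' := by
  constructor
  · rintro ⟨σ, ⟨hσ, -⟩, rfl⟩
    obtain ⟨τ, hτ, heq⟩ := hB.exists_parPerm_eqOn hσ
    exact ⟨τ, hτ, (heq.mono hA).image_eq⟩
  · rintro ⟨σ, ⟨hσ, -⟩, rfl⟩
    exact ⟨σ, ⟨hσ, fun e he => absurd (Set.mem_univ e) he⟩, rfl⟩

theorem ParallelClosed.not_partEquiv_univ (hB : ParallelClosed φ B) {A A' : Set E}
    (hA : A.Nonempty) (hAB : A ⊆ B) (hA' : A' ⊆ Bᶜ) : ¬ PartEquiv φ Set.univ A A' := by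
  rintro ⟨σ, ⟨hσ, -⟩, rfl⟩
  obtain ⟨e, he⟩ := hA
  exact hA' ⟨e, he, rfl⟩ ((hB.perm_mem_iff hσ e).2 (hAB he))

section DisjointSupports

variable {A₁ : Set E}

theorem mem_of_common_vertex (hdisj : hSupp φ A₁ ∩ hSupp φ A₁ᶜ = ∅) {e f : E} {v : V}
    (he : v ∈ φ e) (hf : v ∈ φ f) (he₁ : e ∈ A₁) : f ∈ A₁ := by
  by_contra hf₁
  exact Set.eq_empty_iff_forall_notMem.1 hdisj v ⟨⟨e, he₁, he⟩, ⟨f, hf₁, hf⟩⟩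

theorem parallelClosed_of_hSupp_disjoint (hdisj : hSupp φ A₁ ∩ hSupp φ A₁ᶜ = ∅)
    (hne : ∀ e, (φ e).Nonempty) :
    ParallelClosed φ A₁ := by
  intro e f hef he
  obtain ⟨v, hv⟩ := hne e
  exact mem_of_common_vertex hdisj hv (hef ▸ hv) he

theorem hConnected.subset_or_subset_compl [DecidableEq V]
    (hdisj : hSupp φ A₁ ∩ hSupp φ A₁ᶜ = ∅) {A : Set E} (hA : hConnected φ A) :
    A ⊆ A₁ ∨ A ⊆ A₁ᶜ := by
  obtain ⟨⟨e, he⟩, hchain⟩ := hA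
  have hlink : ∀ {f f'}, ((φ f) ∩ (φ f')).Nonempty → (f ∈ A₁ ↔ f' ∈ A₁) := by
    rintro f f' ⟨v, hv⟩
    rw [Finset.mem_inter] at hv
    exact ⟨mem_of_common_vertex hdisj hv.1 hv.2, mem_of_common_vertex hdisj hv.2 hv.1⟩
  have hside : ∀ f ∈ A, (f ∈ A₁ ↔ e ∈ A₁) := by
    intro f hf
    induction hchain e he f hf with
    | refl => exact Iff.rfl
    | tail _ hstep ih => exact (hlink hstep.2.2).symm.trans (ih hstep.1)
  by_cases he₁ : e ∈ A₁
  · exact Or.inl fun f hf => (hside f hf).2 he₁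
  · exact Or.inr fun f hf hf₁ => he₁ ((hside f hf).1 hf₁)

end DisjointSupports

end ParallelClosed

section PartsIn

variable {V E : Type} {φ : E → Finset V} {B : Set E} {S₁ S₂ S₁' S₂' : Set (Set E)}

def PartsIn (S : Set (Set E)) (B : Set E) : Prop :=
  ∀ A ∈ S, A.Nonempty ∧ A ⊆ B

theorem hAdmissible.partsIn [DecidableEq V] {k : ℕ} {S : Set (Set E)}
    (hS : hAdmissible φ k B S) : PartsIn S B :=
  fun A hA => ⟨(hS.1 A hA).1, (hS.1 A hA).2.1⟩

theorem PartsIn.image {S : Set (Set E)} (hS : PartsIn S B) {σ : Equiv.Perm E}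
    (hσ : ∀ e ∈ B, σ e ∈ B) : PartsIn ((σ '' ·) '' S) B := by
  rintro _ ⟨A, hA, rfl⟩
  exact ⟨(hS A hA).1.image σ, Set.image_subset_iff.2 fun e he => hσ e ((hS A hA).2 he)⟩

theorem PartsIn.disjoint (h₁ : PartsIn S₁ B) (h₂ : PartsIn S₂ Bᶜ) : Disjoint S₁ S₂ := by
  refine Set.disjoint_left.2 fun A hA₁ hA₂ => ?_
  obtain ⟨e, he⟩ := (h₁ A hA₁).1
  exact (h₂ A hA₂).2 he ((h₁ A hA₁).2 he)

theorem PartsIn.sep_union (h₁ : PartsIn S₁ B) (h₂ : PartsIn S₂ Bᶜ) :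
    {A ∈ S₁ ∪ S₂ | A ⊆ B} = S₁ := by
  ext A
  refine ⟨?_, fun hA => ⟨Or.inl hA, (h₁ A hA).2⟩⟩
  rintro ⟨hA | hA, hAB⟩
  · exact hA
  · obtain ⟨e, he⟩ := (h₂ A hA).1
    exact absurd (hAB he) ((h₂ A hA).2 he)

theorem PartsIn.union_injective (h₁ : PartsIn S₁ B) (h₂ : PartsIn S₂ Bᶜ)
    (h₁' : PartsIn S₁' B) (h₂' : PartsIn S₂' Bᶜ) (h : S₁ ∪ S₂ = S₁' ∪ S₂') :
    S₁ = S₁' ∧ S₂ = S₂' := by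
  have h₁c : PartsIn S₁ Bᶜᶜ := by rwa [compl_compl]
  have h₁c' : PartsIn S₁' Bᶜᶜ := by rwa [compl_compl]
  constructor
  · rw [← h₁.sep_union h₂, h, h₁'.sep_union h₂']
  · rw [← h₂.sep_union h₁c, Set.union_comm, h, Set.union_comm, h₂'.sep_union h₁c']

end PartsIn

section OrbEquivUnion

variable {V E : Type} {φ : E → Finset V} {B : Set E} {S₁ S₂ S₁' S₂' : Set (Set E)}

theorem OrbEquiv.union (h₁ : OrbEquiv φ B S₁ S₁') (h₂ : OrbEquiv φ Bᶜ S₂ S₂')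
    (hS₁ : ∀ A ∈ S₁, A ⊆ B) (hS₂ : ∀ A ∈ S₂, A ⊆ Bᶜ) :
    OrbEquiv φ Set.univ (S₁ ∪ S₂) (S₁' ∪ S₂') := by
  obtain ⟨σ₁, hσ₁, rfl⟩ := h₁
  obtain ⟨σ₂, hσ₂, rfl⟩ := h₂
  have heq₁ : Set.EqOn (σ₁ * σ₂) σ₁ B := fun e he => congrArg σ₁ (hσ₂.2 e fun h => h he)
  have heq₂ : Set.EqOn (σ₁ * σ₂) σ₂ Bᶜ := fun e he => hσ₁.2 _ (hσ₂.mem he)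
  refine ⟨σ₁ * σ₂, ⟨fun e => (hσ₁.1 _).trans (hσ₂.1 e), fun e he => absurd (Set.mem_univ e) he⟩,
    ?_⟩
  rw [Set.image_union, Set.image_congr fun A hA => (heq₁.mono (hS₁ A hA)).image_eq,
    Set.image_congr fun A hA => (heq₂.mono (hS₂ A hA)).image_eq]

theorem OrbEquiv.of_union (hB : ParallelClosed φ B) (h₁ : PartsIn S₁ B) (h₂ : PartsIn S₂ Bᶜ)
    (h₁' : PartsIn S₁' B) (h₂' : PartsIn S₂' Bᶜ) (h : OrbEquiv φ Set.univ (S₁ ∪ S₂) (S₁' ∪ S₂')) :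
    OrbEquiv φ B S₁ S₁' ∧ OrbEquiv φ Bᶜ S₂ S₂' := by
  obtain ⟨σ, ⟨hσ, -⟩, himage⟩ := h
  rw [Set.image_union] at himage
  obtain ⟨rfl, rfl⟩ := PartsIn.union_injective
    (h₁.image fun e => (hB.perm_mem_iff hσ e).2) (h₂.image fun e => (hB.compl.perm_mem_iff hσ e).2)
    h₁' h₂' himage
  exact ⟨hB.orbEquiv_image hσ fun A hA => (h₁ A hA).2,
    hB.compl.orbEquiv_image hσ fun A hA => (h₂ A hA).2⟩

end OrbEquivUnion

section ClassSizes

variable {X Y : Type}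

/-- `alphaS φ B S` unfolds to this for the relation `PartEquiv φ B` on the parts of `S`. -/
noncomputable def classSizeProd (r : X → X → Prop) : ℚ :=
  ∏ᶠ q : Quot r, (Nat.card {x : X // Quot.mk r x = q} : ℚ)

theorem classSizeProd_congr {r : X → X → Prop} {s : Y → Y → Prop} (e : X ≃ Y)
    (h : ∀ x x', r x x' ↔ s (e x) (e x')) : classSizeProd r = classSizeProd s := by
  unfold classSizeProd
  rw [← finprod_comp_equiv (Quot.congr e h)]
  refine finprod_congr fun q => congrArg _ (Nat.card_congr (e.subtypeEquiv fun x => ?_))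
  rw [← Quot.congr_mk e h, (Quot.congr e h).injective.eq_iff]

def quotSumEquiv (r : X ⊕ Y → X ⊕ Y → Prop) (hXY : ∀ x y, ¬ r (.inl x) (.inr y))
    (hYX : ∀ y x, ¬ r (.inr y) (.inl x)) :
    Quot r ≃ Quot (fun x x' => r (.inl x) (.inl x')) ⊕ Quot (fun y y' => r (.inr y) (.inr y'))
    where
  toFun := Quot.lift (Sum.map (Quot.mk _) (Quot.mk _)) (by
    rintro (x | y) (x' | y') h
    · exact congrArg Sum.inl (Quot.sound h)
    · exact absurd h (hXY x y')
    · exact absurd h (hYX y x')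
    · exact congrArg Sum.inr (Quot.sound h))
  invFun := Sum.elim (Quot.lift (Quot.mk r ∘ .inl) fun _ _ h => Quot.sound h)
    (Quot.lift (Quot.mk r ∘ .inr) fun _ _ h => Quot.sound h)
  left_inv := by
    rintro ⟨x | y⟩ <;> rfl
  right_inv := by
    rintro (q | q) <;> induction q using Quot.ind <;> rfl

theorem classSizeProd_sum [Finite X] [Finite Y] (r : X ⊕ Y → X ⊕ Y → Prop)
    (hXY : ∀ x y, ¬ r (.inl x) (.inr y)) (hYX : ∀ y x, ¬ r (.inr y) (.inl x)) :
    classSizeProd r = classSizeProd (fun x x' => r (.inl x) (.inl x')) *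
      classSizeProd (fun y y' => r (.inr y) (.inr y')) := by
  set e := quotSumEquiv r hXY hYX
  have hfiber : ∀ c, Nat.card {z // Quot.mk r z = e.symm c} =
      Nat.card {z // Sum.map (Quot.mk _) (Quot.mk _) z = c} := fun c =>
    Nat.card_congr <| Equiv.subtypeEquivRight fun z => by
      rw [Equiv.eq_symm_apply]
      rcases z with x | y <;> rfl
  have : Fintype (Quot fun x x' => r (.inl x) (.inl x')) := Fintype.ofFinite _
  have : Fintype (Quot fun y y' => r (.inr y) (.inr y')) := Fintype.ofFinite _
  unfold classSizeProd
  rw [← finprod_comp_equiv e.symm, finprod_eq_prod_of_fintype, finprod_eq_prod_of_fintype,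
    finprod_eq_prod_of_fintype, Fintype.prod_sum_type]
  simp only [hfiber]
  congr 1 <;> refine Finset.prod_congr rfl fun q _ => ?_ <;>
    rw [Nat.card_congr Equiv.subtypeSum, Nat.card_sum] <;> simp

end ClassSizes

section AlphaS

variable {V E : Type} {φ : E → Finset V} {B : Set E}

theorem alphaS_image {σ : Equiv.Perm E} (hσ : ParPerm φ B σ) (S : Set (Set E)) :
    alphaS φ B ((σ '' ·) '' S) = alphaS φ B S :=
  (classSizeProd_congr (Equiv.Set.image _ S (Set.image_injective.2 σ.injective))
    fun _ _ => (partEquiv_image_iff hσ).symm).symm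

theorem alphaS_union [Finite E] (hB : ParallelClosed φ B) {S₁ S₂ : Set (Set E)}
    (h₁ : PartsIn S₁ B) (h₂ : PartsIn S₂ Bᶜ) :
    alphaS φ Set.univ (S₁ ∪ S₂) = alphaS φ B S₁ * alphaS φ Bᶜ S₂ := by
  classical
  let part : S₁ ⊕ S₂ → Set E := Sum.elim Subtype.val Subtype.val
  have hpart : ∀ z, ((Equiv.Set.union (h₁.disjoint h₂)).symm z : Set E) = part z := by
    rintro (A | A) <;> simp [part]
  calc alphaS φ Set.univ (S₁ ∪ S₂)
      = classSizeProd fun z z' => PartEquiv φ Set.univ (part z) (part z') :=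
        (classSizeProd_congr (Equiv.Set.union (h₁.disjoint h₂)).symm fun z z' => by
          rw [hpart, hpart]).symm
    _ = classSizeProd (fun A A' : S₁ => PartEquiv φ Set.univ A A') *
          classSizeProd (fun A A' : S₂ => PartEquiv φ Set.univ A A') :=
        classSizeProd_sum _
          (fun A A' => hB.not_partEquiv_univ (h₁ A A.2).1 (h₁ A A.2).2 (h₂ A' A'.2).2)
          (fun A' A h => hB.not_partEquiv_univ (h₁ A A.2).1 (h₁ A A.2).2 (h₂ A' A'.2).2 h.symm)
    _ = alphaS φ B S₁ * alphaS φ Bᶜ S₂ := by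
        congr 1
        · exact classSizeProd_congr (Equiv.refl _) fun A _ => hB.partEquiv_univ_iff (h₁ A A.2).2
        · exact classSizeProd_congr (Equiv.refl _) fun A _ =>
            hB.compl.partEquiv_univ_iff (h₂ A A.2).2

end AlphaS

section Admissible

variable {V E : Type} [DecidableEq V] {φ : E → Finset V} {k : ℕ} {B : Set E}

theorem hAdmissible.sep {S : Set (Set E)} (hS : hAdmissible φ k Set.univ S)
    (hside : ∀ A ∈ S, A ⊆ B ∨ A ⊆ Bᶜ) : hAdmissible φ k B {A ∈ S | A ⊆ B} := by
  refine ⟨fun A hA => ⟨(hS.1 A hA.1).1, hA.2, (hS.1 A hA.1).2.2⟩,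
    fun A hA A' hA' => hS.2.1 A hA.1 A' hA'.1, fun e he => ?_⟩
  obtain ⟨A, hA, heA⟩ := hS.2.2 e (Set.mem_univ e)
  exact ⟨A, ⟨hA, (hside A hA).resolve_right fun h => h heA he⟩, heA⟩

theorem hAdmissible.union {S₁ S₂ : Set (Set E)} (h₁ : hAdmissible φ k B S₁)
    (h₂ : hAdmissible φ k Bᶜ S₂) : hAdmissible φ k Set.univ (S₁ ∪ S₂) := by
  refine ⟨?_, ?_, fun e _ => ?_⟩
  · rintro A (hA | hA)
    · exact ⟨(h₁.1 A hA).1, Set.subset_univ A, (h₁.1 A hA).2.2⟩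
    · exact ⟨(h₂.1 A hA).1, Set.subset_univ A, (h₂.1 A hA).2.2⟩
  · rintro A (hA | hA) A' (hA' | hA') hne
    · exact h₁.2.1 A hA A' hA' hne
    · exact (disjoint_compl_right.mono (h₁.1 A hA).2.1 (h₂.1 A' hA').2.1).inter_eq
    · exact (disjoint_compl_left.mono (h₂.1 A hA).2.1 (h₁.1 A' hA').2.1).inter_eq
    · exact h₂.2.1 A hA A' hA' hne
  · by_cases he : e ∈ B
    · obtain ⟨A, hA, heA⟩ := h₁.2.2 e he
      exact ⟨A, Or.inl hA, heA⟩
    · obtain ⟨A, hA, heA⟩ := h₂.2.2 e he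
      exact ⟨A, Or.inr hA, heA⟩

end Admissible

section Representatives

variable {α : Type} {P : α → Prop} {r : α → α → Prop} {T T' : Set α}

theorem eq_of_rel_of_mem_reps (hr : Equivalence r)
    (hT : (∀ a ∈ T, P a) ∧ ∀ a, P a → ∃! b, b ∈ T ∧ r a b) {a b : α} (ha : a ∈ T) (hb : b ∈ T)
    (h : r a b) : a = b :=
  (hT.2 a (hT.1 a ha)).unique ⟨ha, hr.refl a⟩ ⟨hb, h⟩

theorem finsum_mem_eq_of_reps {M : Type} [AddCommMonoid M] (hr : Equivalence r)
    (hT : (∀ a ∈ T, P a) ∧ ∀ a, P a → ∃! b, b ∈ T ∧ r a b)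
    (hT' : (∀ a ∈ T', P a) ∧ ∀ a, P a → ∃! b, b ∈ T' ∧ r a b)
    {f : α → M} (hf : ∀ a b, r a b → f a = f b) : ∑ᶠ a ∈ T, f a = ∑ᶠ a ∈ T', f a := by
  classical
  let g : α → α := fun a => if h : P a then (hT'.2 a h).exists.choose else a
  have hg : ∀ a ∈ T, g a ∈ T' ∧ r a (g a) := fun a ha => by
    simpa only [g, dif_pos (hT.1 a ha)] using (hT'.2 a (hT.1 a ha)).exists.choose_spec
  refine finsum_mem_eq_of_bijOn g ⟨fun a ha => (hg a ha).1, fun a ha a' ha' hgaa' => ?_,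
    fun b hb => ?_⟩ fun a ha => hf a (g a) (hg a ha).2
  · have haa' : r a (g a') := hgaa' ▸ (hg a ha).2
    exact eq_of_rel_of_mem_reps hr hT ha ha' (hr.trans haa' (hr.symm (hg a' ha').2))
  · obtain ⟨a, ⟨ha, hba⟩, -⟩ := hT.2 b (hT'.1 b hb)
    exact ⟨a, ha, eq_of_rel_of_mem_reps hr hT' (hg a ha).1 hb
      (hr.symm (hr.trans hba (hg a ha).2))⟩

end Representatives

theorem finsum_mem_prod_mul {α β R : Type} [CommSemiring R] {s : Set α} {t : Set β}
    (hs : s.Finite) (ht : t.Finite) (f : α → R) (g : β → R) :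
    ∑ᶠ p ∈ s ×ˢ t, f p.1 * g p.2 = (∑ᶠ a ∈ s, f a) * ∑ᶠ b ∈ t, g b := by
  rw [← hs.coe_toFinset, ← ht.coe_toFinset, ← Finset.coe_product, finsum_mem_coe_finset,
    finsum_mem_coe_finset, finsum_mem_coe_finset, Finset.sum_mul_sum, Finset.sum_product]

section OrbitReps

variable {V E : Type} [DecidableEq V] {φ : E → Finset V} {k : ℕ} {A₁ : Set E}
  {T₁ T₂ : Set (Set (Set E))}

theorem eq_of_orbEquiv_union (hB : ParallelClosed φ A₁) (hT₁ : IsOrbitReps φ k A₁ T₁)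
    (hT₂ : IsOrbitReps φ k A₁ᶜ T₂) {p p' : Set (Set E) × Set (Set E)} (hp : p ∈ T₁ ×ˢ T₂)
    (hp' : p' ∈ T₁ ×ˢ T₂) (h : OrbEquiv φ Set.univ (p.1 ∪ p.2) (p'.1 ∪ p'.2)) : p = p' := by
  obtain ⟨h₁, h₂⟩ := h.of_union hB (hT₁.1 _ hp.1).partsIn (hT₂.1 _ hp.2).partsIn
    (hT₁.1 _ hp'.1).partsIn (hT₂.1 _ hp'.2).partsIn
  exact Prod.ext (eq_of_rel_of_mem_reps orbEquiv_equivalence hT₁ hp.1 hp'.1 h₁)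
    (eq_of_rel_of_mem_reps orbEquiv_equivalence hT₂ hp.2 hp'.2 h₂)

theorem injOn_union_of_isOrbitReps (hB : ParallelClosed φ A₁) (hT₁ : IsOrbitReps φ k A₁ T₁)
    (hT₂ : IsOrbitReps φ k A₁ᶜ T₂) : Set.InjOn (fun p => p.1 ∪ p.2) (T₁ ×ˢ T₂) :=
  fun p hp p' hp' (h : p.1 ∪ p.2 = p'.1 ∪ p'.2) =>
    eq_of_orbEquiv_union hB hT₁ hT₂ hp hp' (h ▸ orbEquiv_equivalence.refl _)

theorem isOrbitReps_image_union (hB : ParallelClosed φ A₁)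
    (hdisj : hSupp φ A₁ ∩ hSupp φ A₁ᶜ = ∅) (hT₁ : IsOrbitReps φ k A₁ T₁)
    (hT₂ : IsOrbitReps φ k A₁ᶜ T₂) :
    IsOrbitReps φ k Set.univ ((fun p => p.1 ∪ p.2) '' T₁ ×ˢ T₂) := by
  refine ⟨?_, fun S hS => ?_⟩
  · rintro _ ⟨p, hp, rfl⟩
    exact (hT₁.1 _ hp.1).union (hT₂.1 _ hp.2)
  have hside : ∀ A ∈ S, A ⊆ A₁ ∨ A ⊆ A₁ᶜ := fun A hA =>
    (hS.1 A hA).2.2.1.subset_or_subset_compl hdisj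
  have hside' : ∀ A ∈ S, A ⊆ A₁ᶜ ∨ A ⊆ A₁ᶜᶜ := fun A hA => by
    rw [compl_compl]
    exact (hside A hA).symm
  obtain ⟨R₁, ⟨hR₁, hSR₁⟩, -⟩ := hT₁.2 _ (hS.sep hside)
  obtain ⟨R₂, ⟨hR₂, hSR₂⟩, -⟩ := hT₂.2 _ (hS.sep hside')
  have hSR : OrbEquiv φ Set.univ S (R₁ ∪ R₂) := by
    have h := hSR₁.union hSR₂ (fun A hA => hA.2) (fun A hA => hA.2)
    rwa [← Set.sep_or, Set.sep_eq_self_iff_mem_true.2 hside] at h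
  refine ⟨R₁ ∪ R₂, ⟨⟨(R₁, R₂), ⟨hR₁, hR₂⟩, rfl⟩, hSR⟩, ?_⟩
  rintro _ ⟨⟨p, hp, rfl⟩, hSp⟩
  rw [eq_of_orbEquiv_union hB hT₁ hT₂ (p' := (R₁, R₂)) hp ⟨hR₁, hR₂⟩
    (orbEquiv_equivalence.trans (orbEquiv_equivalence.symm hSp) hSR)]

end OrbitReps

section DeltaTerm

variable {V E : Type} [Fintype V] [LinearOrder V] {φ : E → Finset V} {k n : ℕ} {B : Set E}

theorem deltaTerm_congr {S S' : Set (Set E)} (h : OrbEquiv φ B S S') :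
    deltaTerm φ k n B S = deltaTerm φ k n B S' := by
  obtain ⟨σ, hσ, rfl⟩ := h
  have hinj : Function.Injective (σ '' · : Set E → Set E) := Set.image_injective.2 σ.injective
  unfold deltaTerm
  rw [Nat.card_image_of_injective hinj, finprod_mem_image hinj.injOn, alphaS_image hσ]
  simp only [assocC_image φ hσ.1]

theorem deltaTerm_union [Finite E] (hB : ParallelClosed φ B) {S₁ S₂ : Set (Set E)}
    (h₁ : PartsIn S₁ B) (h₂ : PartsIn S₂ Bᶜ) :
    deltaTerm φ k n Set.univ (S₁ ∪ S₂) = deltaTerm φ k n B S₁ * deltaTerm φ k n Bᶜ S₂ := by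
  unfold deltaTerm
  rw [Nat.card_coe_set_eq, Set.ncard_union_eq (h₁.disjoint h₂),
    finprod_mem_union (h₁.disjoint h₂) (Set.toFinite S₁) (Set.toFinite S₂),
    alphaS_union hB h₁ h₂, pow_add, div_mul_div_comm, Nat.card_coe_set_eq, Nat.card_coe_set_eq]
  ring

theorem assocC_eq_zero {e : E} (he : φ e = ∅) {A : Set E} (heA : e ∈ A) : assocC φ A = 0 := by
  have : IsEmpty {l : List (V × E) // IsRooting φ A l ∧ DigEulerian (rψ φ l)} :=
    ⟨fun ⟨_, ⟨_, _, hedges, hroots, _⟩, _⟩ => by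
      obtain ⟨p, hp, rfl⟩ := List.mem_map.1 ((hedges e).2 heA)
      simpa [he] using hroots p hp⟩
  exact finsum_of_isEmpty _

theorem finsum_deltaTerm_eq_zero [DecidableEq V] [Finite E] {T : Set (Set (Set E))}
    (hT : IsOrbitReps φ k B T) {e : E} (he : φ e = ∅) (heB : e ∈ B) :
    ∑ᶠ S ∈ T, deltaTerm φ k n B S = 0 := by
  refine finsum_mem_of_eqOn_zero fun S hS => ?_
  obtain ⟨A, hA, heA⟩ := (hT.1 S hS).2.2 e heB
  have hfin : S.Finite := Set.toFinite S
  have hprod : ∏ᶠ A ∈ S, assocC φ A = 0 := by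
    rw [← hfin.coe_toFinset, finprod_mem_coe_finset]
    exact Finset.prod_eq_zero (hfin.mem_toFinset.2 hA) (assocC_eq_zero he heA)
  simp [deltaTerm, hprod]

end DeltaTerm

theorem stmt_14_general {V E : Type} [Fintype V] [Fintype E] [LinearOrder V] [DecidableEq V]
    (k : ℕ) (φ : E → Finset V)
    (A₁ : Set E)
    (hdisj : hSupp φ A₁ ∩ hSupp φ A₁ᶜ = ∅)
    (n : ℕ)
    (T T₁ T₂ : Set (Set (Set E)))
    (hT : IsOrbitReps φ k Set.univ T)
    (hT₁ : IsOrbitReps φ k A₁ T₁)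
    (hT₂ : IsOrbitReps φ k A₁ᶜ T₂) :
    (∑ᶠ S ∈ T, deltaTerm φ k n Set.univ S) =
      (∑ᶠ S ∈ T₁, deltaTerm φ k n A₁ S) * (∑ᶠ S ∈ T₂, deltaTerm φ k n A₁ᶜ S) := by
  by_cases hne : ∀ e, (φ e).Nonempty
  · have hB := parallelClosed_of_hSupp_disjoint hdisj hne
    calc ∑ᶠ S ∈ T, deltaTerm φ k n Set.univ S
        = ∑ᶠ S ∈ (fun p => p.1 ∪ p.2) '' T₁ ×ˢ T₂, deltaTerm φ k n Set.univ S :=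
          finsum_mem_eq_of_reps orbEquiv_equivalence hT
            (isOrbitReps_image_union hB hdisj hT₁ hT₂) fun _ _ => deltaTerm_congr
      _ = ∑ᶠ p ∈ T₁ ×ˢ T₂, deltaTerm φ k n A₁ p.1 * deltaTerm φ k n A₁ᶜ p.2 := by
          rw [finsum_mem_image (injOn_union_of_isOrbitReps hB hT₁ hT₂)]
          exact finsum_mem_congr rfl fun p hp =>
            deltaTerm_union hB (hT₁.1 _ hp.1).partsIn (hT₂.1 _ hp.2).partsIn
      _ = _ := finsum_mem_prod_mul (Set.toFinite _) (Set.toFinite _) _ _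
  · obtain ⟨e, he⟩ := not_forall.1 hne
    rw [Finset.not_nonempty_iff_eq_empty] at he
    rw [finsum_deltaTerm_eq_zero hT he (Set.mem_univ e)]
    by_cases he₁ : e ∈ A₁
    · rw [finsum_deltaTerm_eq_zero hT₁ he he₁, zero_mul]
    · rw [finsum_deltaTerm_eq_zero hT₂ he he₁, mul_zero]

/-- Let `X₁` and `X₂` be Veblen multi-hypergraphs of rank `k` with
disjoint vertex sets and disjoint edge sets, and let `X = X₁ ⊔ X₂`.  Then for every
`n ≥ 0`, `Δ(n, X) = Δ(n, X₁) · Δ(n, X₂)`.  Here `X` is presented by `φ : E → Finset V`,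
the edges of `X₁` being `A₁` and those of `X₂` its complement, and
`Δ(n, ·) = ∑_{𝐒 ∈ S̃(·)} (-(k-1)ⁿ)^{c(𝐒)} C_𝐒 / α_𝐒` is expressed via an arbitrary set
of representatives of the orbits `S̃(·)`. -/
theorem stmt_14 {V E : Type} [Fintype V] [Fintype E] [LinearOrder V] [DecidableEq V]
    [DecidableEq E]
    (k : ℕ) (φ : E → Finset V) (hφ : ∀ e : E, (φ e).card = k)
    (A₁ : Set E)
    (hVeb₁ : hVeblen φ k A₁) (hVeb₂ : hVeblen φ k A₁ᶜ)
    (hdisj : hSupp φ A₁ ∩ hSupp φ A₁ᶜ = ∅)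
    (n : ℕ)
    (T T₁ T₂ : Set (Set (Set E)))
    (hT : IsOrbitReps φ k Set.univ T)
    (hT₁ : IsOrbitReps φ k A₁ T₁)
    (hT₂ : IsOrbitReps φ k A₁ᶜ T₂) :
    (∑ᶠ S ∈ T, deltaTerm φ k n Set.univ S) =
      (∑ᶠ S ∈ T₁, deltaTerm φ k n A₁ S) * (∑ᶠ S ∈ T₂, deltaTerm φ k n A₁ᶜ S) :=
  stmt_14_general k φ A₁ hdisj n T T₁ T₂ hT hT₁ hT₂
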